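/- Let L be a Euclidean lattice spanning a finite-dimensional real inner product space E, let F be a subspace of E with orthogonal complement F^⊥, and let π_F and π_{F^⊥} denote the orthogonal projections onto F and F^⊥. Then there are ℤ-module isomorphisms L/((L ∩ F) ⊕ (L ∩ F^⊥)) ≅ π_F(L)/(L ∩ F) ≅ π_{F^⊥}(L)/(L ∩ F^⊥) ≅ (π_F(L) ⊕ π_{F^⊥}(L))/L. -/

import Mathlib

/-!
Since `x = π_F x + π_{F^⊥} x`, a vector `x ∈ L` has `π_F x ∈ L` exactly when
`x ∈ (L ∩ F) ⊕ (L ∩ F^⊥)`. So `x ↦ [π_F x]` maps `L` onto `π_F(L)/(L ∩ F)`, and also onto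
`(π_F(L) ⊕ π_{F^⊥}(L))/L`, with kernel `(L ∩ F) ⊕ (L ∩ F^⊥)` in both cases. Exchanging `F` and
`F^⊥` gives the remaining isomorphism.
-/

open scoped RealInnerProductSpace Classical

noncomputable section

section LatticeDefs

variable {E : Type*} [NormedAddCommGroup E] [InnerProductSpace ℝ E] [FiniteDimensional ℝ E]

/-- `L` is a Euclidean lattice in `E`: a finitely generated discrete `ℤ`-submodule
spanning `E` over `ℝ`. -/
def IsEucLattice (L : Submodule ℤ E) : Prop :=
  L.FG ∧ DiscreteTopology L ∧ Submodule.span ℝ (L : Set E) = ⊤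

/-- The rank of a lattice: the dimension of its real span. -/
def latRank (L : Submodule ℤ E) : ℕ :=
  Module.finrank ℝ (Submodule.span ℝ (L : Set E))

/-- The volume of a lattice: the square root of the Gram determinant of a `ℤ`-basis
(set to `0` if no finite `ℤ`-basis exists). -/
def latVol (L : Submodule ℤ E) : ℝ :=
  if h : ∃ n : ℕ, Nonempty (Module.Basis (Fin n) ℤ L) then
    Real.sqrt (Matrix.det (Matrix.of fun i j : Fin h.choose =>
      ⟪(↑(h.choose_spec.some i) : E), (↑(h.choose_spec.some j) : E)⟫))
  else 0

/-- The slope `μ(L) = (vol L) ^ (1 / rk L)`. -/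
def latSlope (L : Submodule ℤ E) : ℝ :=
  latVol L ^ ((latRank L : ℝ)⁻¹)

/-- `M` is a (primitive) sublattice of `L`: `M = L ∩ F` for a real subspace `F`. -/
def IsSublatticeOf (L M : Submodule ℤ E) : Prop :=
  ∃ F : Submodule ℝ E, M = L ⊓ F.restrictScalars ℤ

/-- The minimal slope: the infimum (in fact minimum) of slopes of nonzero sublattices. -/
def muMin (L : Submodule ℤ E) : ℝ :=
  sInf (latSlope '' {M : Submodule ℤ E | IsSublatticeOf L M ∧ M ≠ ⊥})

/-- The orthogonal projection of `E` onto a subspace `F`, as a `ℤ`-linear endomorphism. -/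
def projMap (F : Submodule ℝ E) : E →ₗ[ℤ] E :=
  ((F.subtype.comp (Submodule.orthogonalProjectionOnto F).toLinearMap)).restrictScalars ℤ

/-- The image `π_F(L)` of a lattice under orthogonal projection onto `F`. -/
def projLat (F : Submodule ℝ E) (L : Submodule ℤ E) : Submodule ℤ E :=
  L.map (projMap F)

lemma projMap_mem_projLat (F : Submodule ℝ E) (L : Submodule ℤ E) {x : E} (hx : x ∈ L) :
    projMap F x ∈ projLat F L :=
  Submodule.mem_map_of_mem hx

/-- The quotient lattice `L/M`: the image of `L` under the orthogonal projection onto the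
orthogonal complement of the real span of `M`. -/
def quotLat (L M : Submodule ℤ E) : Submodule ℤ E :=
  projLat (Submodule.span ℝ (M : Set E))ᗮ L

/-- The maximal slope: the supremum (in fact maximum) of `μ(L/N)` over proper sublattices. -/
def muMax (L : Submodule ℤ E) : ℝ :=
  sSup ((fun N => latSlope (quotLat L N)) '' {N : Submodule ℤ E | IsSublatticeOf L N ∧ N ≠ L})

/-- `L` is semistable if its minimal slope equals its slope. -/
def Semistable (L : Submodule ℤ E) : Prop :=
  muMin L = latSlope L

/-- `D` is the destabilizing sublattice of `L`: the maximal nonzero sublattice of slope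
`μ_min(L)`. -/
def IsDestab (L D : Submodule ℤ E) : Prop :=
  IsSublatticeOf L D ∧ D ≠ ⊥ ∧ latSlope D = muMin L ∧
    ∀ M : Submodule ℤ E, IsSublatticeOf L M → M ≠ ⊥ → latSlope M = muMin L → M ≤ D

/-- `N₀` is the co-destabilizing sublattice of `L`: the minimal proper sublattice with
`μ(L/N₀) = μ_max(L)`. -/
def IsCodestab (L N₀ : Submodule ℤ E) : Prop :=
  IsSublatticeOf L N₀ ∧ N₀ ≠ L ∧ latSlope (quotLat L N₀) = muMax L ∧
    ∀ N : Submodule ℤ E, IsSublatticeOf L N → N ≠ L → latSlope (quotLat L N) = muMax L → N₀ ≤ N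

/-- The dual lattice `L* = {y | ⟨x, y⟩ ∈ ℤ for all x ∈ L}`. -/
def dualLat (L : Submodule ℤ E) : Submodule ℤ E :=
  ⨅ x ∈ L, Submodule.comap (((innerSL ℝ x).toLinearMap).restrictScalars ℤ)
    (Submodule.span ℤ ({1} : Set ℝ))

end LatticeDefs

section TensorDefs

variable {E F G : Type*}
  [NormedAddCommGroup E] [InnerProductSpace ℝ E] [FiniteDimensional ℝ E]
  [NormedAddCommGroup F] [InnerProductSpace ℝ F] [FiniteDimensional ℝ F]
  [NormedAddCommGroup G] [InnerProductSpace ℝ G] [FiniteDimensional ℝ G]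

/-- `t : E → F → G` realizes `G` as the tensor product `E ⊗ F` of inner product spaces:
it satisfies `⟨x ⊗ y, x' ⊗ y'⟩ = ⟨x, x'⟩⟨y, y'⟩`, its image spans `G`, and
`dim G = dim E · dim F`. -/
def IsTensorProdMap (t : E →ₗ[ℝ] F →ₗ[ℝ] G) : Prop :=
  (∀ (x x' : E) (y y' : F), ⟪t x y, t x' y'⟫ = ⟪x, x'⟫ * ⟪y, y'⟫) ∧
  Submodule.span ℝ (Set.range fun p : E × F => t p.1 p.2) = ⊤ ∧
  Module.finrank ℝ G = Module.finrank ℝ E * Module.finrank ℝ F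

/-- The tensor product lattice `L ⊗ M` inside the model `G` of `E ⊗ F`. -/
def tensorLat (t : E →ₗ[ℝ] F →ₗ[ℝ] G) (L : Submodule ℤ E) (M : Submodule ℤ F) :
    Submodule ℤ G :=
  Submodule.span ℤ {z : G | ∃ x ∈ L, ∃ y ∈ M, z = t x y}

/-- The "tensor product" of two subspaces inside the model `G` of `E ⊗ F`. -/
def tensorSub (t : E →ₗ[ℝ] F →ₗ[ℝ] G) (A : Submodule ℝ E) (B : Submodule ℝ F) :
    Submodule ℝ G :=
  Submodule.span ℝ {z : G | ∃ x ∈ A, ∃ y ∈ B, z = t x y}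

end TensorDefs

end

theorem LinearMap.nonempty_quotient_equiv_of_surjective {R M N : Type*} [Ring R]
    [AddCommGroup M] [Module R M] [AddCommGroup N] [Module R N] {p : Submodule R M}
    (f : M →ₗ[R] N) (hf : Function.Surjective f) (hker : LinearMap.ker f = p) :
    Nonempty ((M ⧸ p) ≃ₗ[R] N) :=
  ⟨(Submodule.quotEquivOfEq _ _ hker.symm).trans (f.quotKerEquivOfSurjective hf)⟩

section Projection

variable {E : Type*} [NormedAddCommGroup E] [InnerProductSpace ℝ E] [FiniteDimensional ℝ E]

lemma projMap_mem (F : Submodule ℝ E) (x : E) : projMap F x ∈ F :=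
  (Submodule.orthogonalProjectionOnto F x).2

lemma projMap_eq_self {F : Submodule ℝ E} {x : E} (hx : x ∈ F) : projMap F x = x :=
  (Submodule.starProjection_eq_self_iff (K := F)).mpr hx

lemma projMap_eq_zero {F : Submodule ℝ E} {x : E} (hx : x ∈ Fᗮ) : projMap F x = 0 := by
  change ((F.orthogonalProjectionOnto x : F) : E) = 0
  rw [Submodule.orthogonalProjectionOnto_apply_of_mem_orthogonal hx, ZeroMemClass.coe_zero]

lemma projMap_add_projMap_orthogonal (F : Submodule ℝ E) (x : E) :
    projMap F x + projMap Fᗮ x = x :=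
  Submodule.starProjection_add_starProjection_orthogonal (K := F) x

variable (L : Submodule ℤ E) (F : Submodule ℝ E)

lemma projMap_mem_iff_mem_sup {x : E} (hx : x ∈ L) :
    projMap F x ∈ L ↔ x ∈ (L ⊓ F.restrictScalars ℤ) ⊔ (L ⊓ Fᗮ.restrictScalars ℤ) := by
  constructor
  · intro h
    have hdecomp := projMap_add_projMap_orthogonal F x
    have horth : projMap Fᗮ x ∈ L := by
      rw [eq_sub_of_add_eq' hdecomp]
      exact L.sub_mem hx h
    exact Submodule.mem_sup.mpr
      ⟨_, ⟨h, projMap_mem F x⟩, _, ⟨horth, projMap_mem Fᗮ x⟩, hdecomp⟩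
  · intro h
    obtain ⟨a, ⟨haL, haF⟩, b, ⟨-, hbF⟩, rfl⟩ := Submodule.mem_sup.mp h
    rwa [map_add, projMap_eq_self haF, projMap_eq_zero hbF, add_zero]

theorem nonempty_quotient_sup_inf_equiv_projLat_quotient :
    Nonempty ((↥L ⧸ Submodule.comap L.subtype
        ((L ⊓ F.restrictScalars ℤ) ⊔ (L ⊓ Fᗮ.restrictScalars ℤ))) ≃ₗ[ℤ]
      (↥(projLat F L) ⧸ Submodule.comap (projLat F L).subtype (L ⊓ F.restrictScalars ℤ))) := by
  let S := Submodule.comap (projLat F L).subtype (L ⊓ F.restrictScalars ℤ)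
  let f : ↥L →ₗ[ℤ] ↥(projLat F L) ⧸ S :=
    S.mkQ.comp ((projMap F).restrict fun _ hx => projMap_mem_projLat F L hx)
  refine f.nonempty_quotient_equiv_of_surjective ?_ ?_
  · rintro ⟨⟨z, x, hx, rfl⟩⟩
    exact ⟨⟨x, hx⟩, rfl⟩
  · ext x
    rw [LinearMap.mem_ker, LinearMap.comp_apply, Submodule.mkQ_apply,
      Submodule.Quotient.mk_eq_zero]
    change projMap F (x : E) ∈ L ⊓ F.restrictScalars ℤ ↔ _
    simp only [Submodule.mem_inf, projMap_mem_iff_mem_sup L F x.2, Submodule.mem_comap,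
      Submodule.subtype_apply]
    exact and_iff_left (projMap_mem F x)

theorem nonempty_quotient_sup_inf_equiv_sup_projLat_quotient :
    Nonempty ((↥L ⧸ Submodule.comap L.subtype
        ((L ⊓ F.restrictScalars ℤ) ⊔ (L ⊓ Fᗮ.restrictScalars ℤ))) ≃ₗ[ℤ]
      (↥(projLat F L ⊔ projLat Fᗮ L) ⧸
        Submodule.comap (projLat F L ⊔ projLat Fᗮ L).subtype L)) := by
  let P := projLat F L ⊔ projLat Fᗮ L
  let S := Submodule.comap P.subtype L
  let f : ↥L →ₗ[ℤ] ↥P ⧸ S :=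
    S.mkQ.comp ((projMap F).restrict fun _ hx =>
      Submodule.mem_sup_left (projMap_mem_projLat F L hx))
  refine f.nonempty_quotient_equiv_of_surjective ?_ ?_
  · rintro ⟨z, hz⟩
    obtain ⟨_, ⟨a, ha, rfl⟩, _, ⟨b, hb, rfl⟩, hz⟩ := Submodule.mem_sup.mp hz
    refine ⟨⟨a - b, L.sub_mem ha hb⟩, (Submodule.Quotient.eq S).mpr ?_⟩
    have hdiff : projMap F (a - b) - z = -b :=
      calc projMap F (a - b) - z = -(projMap F b + projMap Fᗮ b) := by
            rw [← hz, map_sub]; abel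
        _ = -b := by rw [projMap_add_projMap_orthogonal]
    change projMap F (a - b) - z ∈ L
    rw [hdiff]
    exact L.neg_mem hb
  · ext x
    rw [LinearMap.mem_ker, LinearMap.comp_apply, Submodule.mkQ_apply,
      Submodule.Quotient.mk_eq_zero]
    change projMap F (x : E) ∈ L ↔ _
    exact projMap_mem_iff_mem_sup L F x.2

end Projection

theorem statement_18_general {E : Type*} [NormedAddCommGroup E] [InnerProductSpace ℝ E]
    [FiniteDimensional ℝ E] (L : Submodule ℤ E)
    (F : Submodule ℝ E) :
    Nonempty ((↥L ⧸ Submodule.comap L.subtype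
        ((L ⊓ F.restrictScalars ℤ) ⊔ (L ⊓ Fᗮ.restrictScalars ℤ))) ≃ₗ[ℤ]
      (↥(projLat F L) ⧸ Submodule.comap (projLat F L).subtype (L ⊓ F.restrictScalars ℤ))) ∧
    Nonempty ((↥L ⧸ Submodule.comap L.subtype
        ((L ⊓ F.restrictScalars ℤ) ⊔ (L ⊓ Fᗮ.restrictScalars ℤ))) ≃ₗ[ℤ]
      (↥(projLat Fᗮ L) ⧸ Submodule.comap (projLat Fᗮ L).subtype (L ⊓ Fᗮ.restrictScalars ℤ))) ∧
    Nonempty ((↥L ⧸ Submodule.comap L.subtype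
        ((L ⊓ F.restrictScalars ℤ) ⊔ (L ⊓ Fᗮ.restrictScalars ℤ))) ≃ₗ[ℤ]
      (↥(projLat F L ⊔ projLat Fᗮ L) ⧸
        Submodule.comap (projLat F L ⊔ projLat Fᗮ L).subtype L)) := by
  have hswap : (L ⊓ F.restrictScalars ℤ) ⊔ (L ⊓ Fᗮ.restrictScalars ℤ) =
      (L ⊓ Fᗮ.restrictScalars ℤ) ⊔ (L ⊓ Fᗮᗮ.restrictScalars ℤ) := by
    rw [Submodule.orthogonal_orthogonal, sup_comm]
  refine ⟨nonempty_quotient_sup_inf_equiv_projLat_quotient L F, ?_,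
    nonempty_quotient_sup_inf_equiv_sup_projLat_quotient L F⟩
  rw [hswap]
  exact nonempty_quotient_sup_inf_equiv_projLat_quotient L Fᗮ

/-- For a Euclidean lattice `L` spanning `E` and a subspace `F ⊆ E`,
one has `ℤ`-module isomorphisms
`L/((L∩F) ⊕ (L∩F^⊥)) ≅ π_F(L)/(L∩F) ≅ π_{F^⊥}(L)/(L∩F^⊥) ≅ (π_F(L) ⊕ π_{F^⊥}(L))/L`. -/
theorem statement_18 {E : Type*} [NormedAddCommGroup E] [InnerProductSpace ℝ E]
    [FiniteDimensional ℝ E] (L : Submodule ℤ E) (hL : IsEucLattice L)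
    (F : Submodule ℝ E) :
    Nonempty ((↥L ⧸ Submodule.comap L.subtype
        ((L ⊓ F.restrictScalars ℤ) ⊔ (L ⊓ Fᗮ.restrictScalars ℤ))) ≃ₗ[ℤ]
      (↥(projLat F L) ⧸ Submodule.comap (projLat F L).subtype (L ⊓ F.restrictScalars ℤ))) ∧
    Nonempty ((↥L ⧸ Submodule.comap L.subtype
        ((L ⊓ F.restrictScalars ℤ) ⊔ (L ⊓ Fᗮ.restrictScalars ℤ))) ≃ₗ[ℤ]
      (↥(projLat Fᗮ L) ⧸ Submodule.comap (projLat Fᗮ L).subtype (L ⊓ Fᗮ.restrictScalars ℤ))) ∧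
    Nonempty ((↥L ⧸ Submodule.comap L.subtype
        ((L ⊓ F.restrictScalars ℤ) ⊔ (L ⊓ Fᗮ.restrictScalars ℤ))) ≃ₗ[ℤ]
      (↥(projLat F L ⊔ projLat Fᗮ L) ⧸
        Submodule.comap (projLat F L ⊔ projLat Fᗮ L).subtype L)) :=
  statement_18_general L F
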